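/- arXiv:1007.3558 — 2 statements merged into one kernel-verified Lean document; each statement's English description precedes it below -/
import Mathlib

section
/- For every real number C > 0, if g ∈ A_C has vanishing constant coefficient (g(0) = 0), then for every natural number n ≥ 1 one has ‖g^n‖_C ≤ ‖g‖_C^n / n!; in particular ‖g^n‖_C^{1/n} → 0 as n → ∞, i.e. g is topologically nilpotent in the Banach algebra A_C. -/
/-!
Since `g` has no constant term, `gⁿ` has no coefficients below degree `n`. So in the Cauchy
product `g * gⁿ` only the pairs of degrees `k ≥ 1`, `l ≥ n` contribute, and for these
`(n + 1) k! l! ≤ (k + l)!`. With this inequality, the usual proof of submultiplicativity of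
`‖·‖_C` gives `(n + 1)! ‖gⁿ⁺¹‖_C ≤ ‖g‖_C · n! ‖gⁿ‖_C`, hence `n! ‖gⁿ‖_C ≤ ‖g‖_Cⁿ` by induction.
The `n`-th root of `‖g‖_Cⁿ / n!` tends to `0` because `n!` eventually exceeds `mⁿ` for every `m`.
-/

open scoped ENNReal

/-- The norm `‖f‖_C = ∑_{j=0}^∞ |a_j| C^j / j!` of a formal power series
`f = ∑ a_j t^j ∈ ℂ[[t]]`, valued in `[0,∞]`. -/
noncomputable def normC (C : ℝ) (f : PowerSeries ℂ) : ℝ≥0∞ :=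
  ∑' j : ℕ, (‖(PowerSeries.coeff (R := ℂ) j) f‖₊ : ℝ≥0∞) * ENNReal.ofReal (C ^ j / (j.factorial : ℝ))

/-- `A_C = {f ∈ ℂ[[t]] : ‖f‖_C < ∞}`. -/
def Asub (C : ℝ) : Set (PowerSeries ℂ) := {f | normC C f < ⊤}

open scoped Nat NNReal
open PowerSeries Finset Filter Topology

theorem ENNReal.tsum_mul_tsum_eq_tsum_sum_antidiagonal {A : Type*} [AddCommMonoid A]
    [HasAntidiagonal A] (f g : A → ℝ≥0∞) :
    (∑' k, f k) * ∑' l, g l = ∑' n, ∑ kl ∈ antidiagonal n, f kl.1 * g kl.2 := by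
  calc (∑' k, f k) * ∑' l, g l = ∑' kl : A × A, f kl.1 * g kl.2 := by
        rw [ENNReal.tsum_prod (f := fun k l => f k * g l), ← ENNReal.tsum_mul_right]
        simp_rw [ENNReal.tsum_mul_left]
    _ = ∑' x : Σ n : A, antidiagonal n, f (x.2 : A × A).1 * g (x.2 : A × A).2 :=
        (HasAntidiagonal.sigmaAntidiagonalEquivProd.tsum_eq fun kl => f kl.1 * g kl.2).symm
    _ = _ := by
        rw [ENNReal.tsum_sigma']
        simp_rw [Finset.tsum_subtype (antidiagonal _) fun kl => f kl.1 * g kl.2]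

theorem PowerSeries.nnnorm_coeff_mul_le {R : Type*} [SeminormedRing R] (f g : R⟦X⟧) (n : ℕ) :
    ‖coeff n (f * g)‖₊ ≤ ∑ kl ∈ antidiagonal n, ‖coeff kl.1 f‖₊ * ‖coeff kl.2 g‖₊ := by
  rw [coeff_mul]
  exact (nnnorm_sum_le _ _).trans (sum_le_sum fun _ _ => nnnorm_mul_le _ _)

theorem PowerSeries.tsum_nnnorm_coeff_mul_le {R : Type*} [SeminormedRing R] (f g : R⟦X⟧)
    {a b c : ℕ → ℝ≥0∞}
    (h : ∀ k l, coeff k f ≠ 0 → coeff l g ≠ 0 → c (k + l) ≤ a k * b l) :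
    ∑' n, ‖coeff n (f * g)‖₊ * c n ≤
      (∑' k, ‖coeff k f‖₊ * a k) * ∑' l, ‖coeff l g‖₊ * b l := by
  rw [ENNReal.tsum_mul_tsum_eq_tsum_sum_antidiagonal]
  refine ENNReal.tsum_le_tsum fun n => ?_
  calc (‖coeff n (f * g)‖₊ : ℝ≥0∞) * c n
      ≤ (∑ kl ∈ antidiagonal n, ‖coeff kl.1 f‖₊ * ‖coeff kl.2 g‖₊ : ℝ≥0) * c n := by
        gcongr
        exact nnnorm_coeff_mul_le f g n
    _ = ∑ kl ∈ antidiagonal n, (‖coeff kl.1 f‖₊ * ‖coeff kl.2 g‖₊ : ℝ≥0∞) * c (kl.1 + kl.2) := by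
        push_cast
        rw [sum_mul]
        exact sum_congr rfl fun kl hkl => by rw [mem_antidiagonal.1 hkl]
    _ ≤ _ := by
        refine sum_le_sum fun kl _ => ?_
        by_cases hf : coeff kl.1 f = 0
        · simp [hf]
        by_cases hg : coeff kl.2 g = 0
        · simp [hg]
        calc (‖coeff kl.1 f‖₊ * ‖coeff kl.2 g‖₊ : ℝ≥0∞) * c (kl.1 + kl.2)
            ≤ ‖coeff kl.1 f‖₊ * ‖coeff kl.2 g‖₊ * (a kl.1 * b kl.2) := by gcongr; exact h _ _ hf hg
          _ = _ := by ring

theorem PowerSeries.coeff_pow_eq_zero_of_lt {R : Type*} [CommSemiring R] {g : R⟦X⟧}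
    (h0 : constantCoeff g = 0) {n l : ℕ} (hl : l < n) : coeff l (g ^ n) = 0 :=
  X_pow_dvd_iff.mp (pow_dvd_pow_of_dvd (X_dvd_iff.mpr h0) n) l hl

theorem Nat.succ_mul_factorial_mul_factorial_le {n k l : ℕ} (hk : 1 ≤ k) (hl : n ≤ l) :
    (n + 1) * (k ! * l !) ≤ (k + l)! := by
  calc (n + 1) * (k ! * l !) ≤ (k + l).choose l * (k ! * l !) := by
        gcongr
        calc n + 1 ≤ (l + 1).choose l := by rw [Nat.choose_succ_self_right]; omega
          _ ≤ (k + l).choose l := Nat.choose_le_choose l (by omega)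
    _ = (k + l)! := by rw [← mul_assoc, Nat.add_choose_mul_factorial_mul_factorial]

theorem succ_mul_pow_div_factorial_add_le {C : ℝ} (hC : 0 ≤ C) {n k l : ℕ} (hk : 1 ≤ k)
    (hl : n ≤ l) : (n + 1) * (C ^ (k + l) / (k + l)!) ≤ C ^ k / k ! * (C ^ l / l !) := by
  have hfact : ((n + 1) * (k ! * l !) : ℝ) ≤ (k + l)! := by
    exact_mod_cast Nat.succ_mul_factorial_mul_factorial_le hk hl
  calc (n + 1) * (C ^ (k + l) / (k + l)!) = C ^ k * C ^ l * ((n + 1) / (k + l)!) := by ring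
    _ ≤ C ^ k * C ^ l * (1 / (k ! * l !)) := by
        refine mul_le_mul_of_nonneg_left ?_ (by positivity)
        rw [div_le_div_iff₀ (by positivity) (by positivity)]
        linarith
    _ = C ^ k / k ! * (C ^ l / l !) := by ring

theorem factorial_mul_normC (C : ℝ) (f : PowerSeries ℂ) (n : ℕ) :
    (n ! : ℝ≥0∞) * normC C f =
      ∑' j, ‖coeff j f‖₊ * ENNReal.ofReal (n ! * (C ^ j / j !)) := by
  rw [normC, ← ENNReal.tsum_mul_left]
  refine tsum_congr fun j => ?_
  rw [ENNReal.ofReal_mul (by positivity), ENNReal.ofReal_natCast]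
  ring

theorem factorial_mul_normC_pow_le {C : ℝ} (hC : 0 ≤ C) {g : PowerSeries ℂ}
    (h0 : constantCoeff g = 0) (n : ℕ) : (n ! : ℝ≥0∞) * normC C (g ^ n) ≤ normC C g ^ n := by
  induction n with
  | zero =>
    rw [Nat.factorial_zero, Nat.cast_one, one_mul, pow_zero, pow_zero, normC,
      tsum_eq_single 0 fun j hj => by simp [coeff_one, hj]]
    simp
  | succ n ih =>
    have hweight : ∀ k l, coeff k g ≠ 0 → coeff l (g ^ n) ≠ 0 →
        ENNReal.ofReal ((n + 1)! * (C ^ (k + l) / (k + l)!)) ≤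
          ENNReal.ofReal (C ^ k / k !) * ENNReal.ofReal (n ! * (C ^ l / l !)) := by
      intro k l hgk hgl
      have hk : 1 ≤ k := Nat.one_le_iff_ne_zero.mpr fun hk0 => hgk (by simpa [hk0] using h0)
      have hl : n ≤ l := not_lt.mp fun hln => hgl (coeff_pow_eq_zero_of_lt h0 hln)
      rw [← ENNReal.ofReal_mul (by positivity)]
      refine ENNReal.ofReal_le_ofReal ?_
      calc ((n + 1)! : ℝ) * (C ^ (k + l) / (k + l)!)
          = n ! * ((n + 1) * (C ^ (k + l) / (k + l)!)) := by push_cast [Nat.factorial_succ]; ring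
        _ ≤ n ! * (C ^ k / k ! * (C ^ l / l !)) :=
            mul_le_mul_of_nonneg_left (succ_mul_pow_div_factorial_add_le hC hk hl) (by positivity)
        _ = C ^ k / k ! * (n ! * (C ^ l / l !)) := by ring
    calc ((n + 1)! : ℝ≥0∞) * normC C (g ^ (n + 1))
        ≤ normC C g * ((n ! : ℝ≥0∞) * normC C (g ^ n)) := by
          rw [factorial_mul_normC, factorial_mul_normC, pow_succ']
          exact tsum_nnnorm_coeff_mul_le g (g ^ n) hweight
      _ ≤ normC C g * normC C g ^ n := by gcongr
      _ = normC C g ^ (n + 1) := (pow_succ' _ _).symm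

theorem ENNReal.tendsto_rpow_one_div_of_le_pow_div_factorial {x : ℕ → ℝ≥0∞} {N : ℝ≥0∞}
    (hN : N ≠ ⊤) (hx : ∀ n, x n ≤ N ^ n / n !) :
    Tendsto (fun n : ℕ => x n ^ (1 / (n : ℝ))) atTop (𝓝 0) := by
  rw [ENNReal.tendsto_nhds_zero]
  intro ε hε
  obtain ⟨m, hm⟩ := ENNReal.exists_nat_gt (ENNReal.div_lt_top hN hε.ne').ne
  have hNm : N / m ≤ ε := by
    rw [ENNReal.div_lt_iff (Or.inl hε.ne') (Or.inr hN)] at hm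
    exact ENNReal.div_le_of_le_mul (by rw [mul_comm]; exact hm.le)
  filter_upwards [Nat.eventually_pow_lt_factorial_sub m 0, eventually_ne_atTop 0] with n hn hn0
  calc x n ^ (1 / (n : ℝ)) ≤ ((N / m) ^ n) ^ (1 / (n : ℝ)) := by
        gcongr
        calc x n ≤ N ^ n / n ! := hx n
          _ ≤ N ^ n / m ^ n := by gcongr; exact_mod_cast hn.le
          _ = (N / m) ^ n := by rw [div_eq_mul_inv, div_eq_mul_inv, mul_pow, ENNReal.inv_pow]
    _ = N / m := by rw [one_div, ENNReal.pow_rpow_inv_natCast hn0]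
    _ ≤ ε := hNm

/-- If `g ∈ A_C` has vanishing constant coefficient then `‖gⁿ‖_C ≤ ‖g‖_Cⁿ/n!`
for all `n ≥ 1`; in particular `‖gⁿ‖_C^{1/n} → 0`, i.e. `g` is topologically
nilpotent in the Banach algebra `A_C`. -/
theorem statement_5 (C : ℝ) (hC : 0 < C) (g : PowerSeries ℂ) (hg : g ∈ Asub C)
    (h0 : PowerSeries.constantCoeff (R := ℂ) g = 0) :
    (∀ n : ℕ, 1 ≤ n → normC C (g ^ n) ≤ normC C g ^ n / (n.factorial : ℝ≥0∞)) ∧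
    Filter.Tendsto (fun n : ℕ => normC C (g ^ n) ^ (1 / (n : ℝ)))
      Filter.atTop (nhds 0) := by
  have hbound (n : ℕ) : normC C (g ^ n) ≤ normC C g ^ n / (n ! : ℝ≥0∞) := by
    rw [ENNReal.le_div_iff_mul_le (Or.inl (by exact_mod_cast n.factorial_ne_zero))
      (Or.inl (ENNReal.natCast_ne_top _)), mul_comm]
    exact factorial_mul_normC_pow_le hC.le h0 n
  exact ⟨fun n _ => hbound n, ENNReal.tendsto_rpow_one_div_of_le_pow_div_factorial hg.ne hbound⟩
end

section
/- For every real number C > 0, an element f ∈ A_C is a unit of the ring A_C if and only if its constant coefficient f(0) is nonzero; consequently A_C is a local ring whose maximal ideal is {f ∈ A_C : f(0) = 0}, and the map f ↦ f(0) induces a ring isomorphism from the residue field of A_C onto ℂ. -/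
/-!
With `w_j = C^j / j!` one has `w_j w_k = binom(j + k, j) w_{j+k}`, and this binomial coefficient
is at least `n + 1` when `j ≥ n` and `k ≥ 1`. Hence multiplying a series of order at least `n` by
one without constant term gains a factor `n + 1`: `(n + 1) ‖f g‖_C ≤ ‖f‖_C ‖g‖_C`. Iterating,
`n! ‖h^n‖_C ≤ ‖h‖_C^n` when `h(0) = 0`, so `(1 - h)⁻¹ = ∑ h^n` has norm at most `exp ‖h‖_C`.
Thus `A_C` is closed under inversion in `ℂ[[t]]`, and a subring of `k[[t]]` closed under inversion
is local, its units being the series with nonzero constant term.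
-/

open scoped ENNReal

open PowerSeries Finset
open scoped Nat

theorem ENNReal.tsum_mul_tsum_eq_tsum_sum_antidiagonal_s7 (f g : ℕ → ℝ≥0∞) :
    (∑' n, f n) * ∑' n, g n = ∑' n, ∑ p ∈ antidiagonal n, f p.1 * g p.2 := by
  calc (∑' n, f n) * ∑' n, g n = ∑' p : ℕ × ℕ, f p.1 * g p.2 := by
        rw [ENNReal.tsum_prod (f := fun a b => f a * g b), ← ENNReal.tsum_mul_right]
        simp_rw [ENNReal.tsum_mul_left]
    _ = ∑' n, ∑ p ∈ antidiagonal n, f p.1 * g p.2 := by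
        rw [← HasAntidiagonal.sigmaAntidiagonalEquivProd.tsum_eq, ENNReal.tsum_sigma']
        exact tsum_congr fun n => tsum_subtype (antidiagonal n) fun p => f p.1 * g p.2

theorem ENNReal.tsum_pow_div_factorial {a : ℝ≥0∞} (ha : a ≠ ⊤) :
    ∑' n, a ^ n / n ! = ENNReal.ofReal (Real.exp a.toReal) := by
  rw [Real.exp_eq_exp_ℝ, ← (NormedSpace.expSeries_div_hasSum_exp a.toReal).tsum_eq,
    ENNReal.ofReal_tsum_of_nonneg (fun n => by positivity) (NormedSpace.expSeries_div_summable _)]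
  refine tsum_congr fun n => ?_
  rw [ENNReal.ofReal_div_of_pos (by positivity), ENNReal.ofReal_pow ENNReal.toReal_nonneg,
    ENNReal.ofReal_toReal ha, ENNReal.ofReal_natCast]

theorem Nat.succ_le_add_choose {n j k : ℕ} (hj : n ≤ j) (hk : 1 ≤ k) :
    n + 1 ≤ (j + k).choose j :=
  calc n + 1 ≤ (j + 1).choose j := by rw [Nat.choose_succ_self_right]; omega
    _ ≤ (j + k).choose j := Nat.choose_le_choose j (by omega)

namespace PowerSeries

theorem nnnorm_coeff_mul_le_s7 {R : Type*} [SeminormedRing R] (m : ℕ) (f g : R⟦X⟧) :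
    ‖coeff m (f * g)‖₊ ≤ ∑ p ∈ antidiagonal m, ‖coeff p.1 f‖₊ * ‖coeff p.2 g‖₊ := by
  rw [coeff_mul]
  exact (nnnorm_sum_le _ _).trans (Finset.sum_le_sum fun p _ => nnnorm_mul_le _ _)

theorem coeff_inv_one_sub {k : Type*} [Field k] {h : k⟦X⟧} (hh : X ∣ h) (m : ℕ) :
    coeff m (1 - h)⁻¹ = ∑ n ∈ range (m + 1), coeff m (h ^ n) := by
  have hunit : constantCoeff (1 - h) ≠ 0 := by simp [X_dvd_iff.mp hh]
  have hsplit : (1 - h)⁻¹ = ∑ n ∈ range (m + 1), h ^ n + (1 - h)⁻¹ * h ^ (m + 1) := by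
    calc (1 - h)⁻¹ = (1 - h)⁻¹ * ((1 - h) * ∑ n ∈ range (m + 1), h ^ n + h ^ (m + 1)) := by
          rw [mul_neg_geom_sum, sub_add_cancel, mul_one]
      _ = _ := by rw [mul_add, ← mul_assoc, PowerSeries.inv_mul_cancel _ hunit, one_mul]
  have htail : coeff m ((1 - h)⁻¹ * h ^ (m + 1)) = 0 :=
    X_pow_dvd_iff.mp ((pow_dvd_pow_of_dvd hh _).mul_left _) m (by omega)
  rw [hsplit, map_add, htail, add_zero, map_sum]

section InvMemSubring

variable {k : Type*} [Field k] {S : Subring k⟦X⟧}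

theorem isUnit_iff_constantCoeff_ne_zero_of_inv_mem (hS : ∀ f ∈ S, f⁻¹ ∈ S) (a : S) :
    IsUnit a ↔ constantCoeff (a : k⟦X⟧) ≠ 0 :=
  ⟨fun ha => (isUnit_iff_constantCoeff.mp (ha.map S.subtype)).ne_zero,
    fun ha => isUnit_iff_exists_inv.mpr
      ⟨⟨_, hS _ a.2⟩, Subtype.ext (PowerSeries.mul_inv_cancel _ ha)⟩⟩

theorem isLocalRing_of_inv_mem (hS : ∀ f ∈ S, f⁻¹ ∈ S) : IsLocalRing S :=
  have : Nontrivial S := ⟨0, 1, fun h => zero_ne_one (congrArg Subtype.val h)⟩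
  .of_isUnit_or_isUnit_one_sub_self fun a => by
    simp only [isUnit_iff_constantCoeff_ne_zero_of_inv_mem hS, AddSubgroupClass.coe_sub,
      OneMemClass.coe_one, map_sub, map_one]
    by_cases h : constantCoeff (a : k⟦X⟧) = 0 <;> simp [h]

theorem maximalIdeal_eq_ker_of_inv_mem [IsLocalRing S] (hS : ∀ f ∈ S, f⁻¹ ∈ S) :
    IsLocalRing.maximalIdeal S = RingHom.ker (constantCoeff.comp S.subtype) := by
  ext a
  rw [IsLocalRing.mem_maximalIdeal, mem_nonunits_iff,
    isUnit_iff_constantCoeff_ne_zero_of_inv_mem hS, not_not, RingHom.mem_ker]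
  rfl

theorem exists_residueField_equiv_of_inv_mem [IsLocalRing S] (hS : ∀ f ∈ S, f⁻¹ ∈ S)
    (hconst : ∀ c, C c ∈ S) :
    ∃ e : IsLocalRing.ResidueField S ≃+* k,
      ∀ f : S, e (IsLocalRing.residue S f) = constantCoeff (f : k⟦X⟧) := by
  have hsurj : Function.Surjective (constantCoeff.comp S.subtype) :=
    fun c => ⟨⟨C c, hconst c⟩, constantCoeff_C c⟩
  exact ⟨(Ideal.quotEquivOfEq (maximalIdeal_eq_ker_of_inv_mem hS)).trans
    (RingHom.quotientKerEquivOfSurjective hsurj), fun f => rfl⟩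

end InvMemSubring

end PowerSeries

noncomputable def borelWeight (C : ℝ) (j : ℕ) : ℝ≥0∞ := ENNReal.ofReal (C ^ j / j !)

theorem normC_eq_tsum (C : ℝ) (f : ℂ⟦X⟧) :
    normC C f = ∑' j, ‖coeff j f‖₊ * borelWeight C j := rfl

theorem borelWeight_mul_borelWeight {C : ℝ} (hC : 0 ≤ C) (j k : ℕ) :
    borelWeight C j * borelWeight C k = (j + k).choose j * borelWeight C (j + k) := by
  rw [borelWeight, borelWeight, borelWeight, ← ENNReal.ofReal_mul (by positivity),
    ← ENNReal.ofReal_natCast, ← ENNReal.ofReal_mul (by positivity), Nat.cast_add_choose]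
  congr 1
  field_simp
  ring

theorem normC_zero (C : ℝ) : normC C 0 = 0 := by
  simp [normC_eq_tsum]

theorem normC_C (C : ℝ) (z : ℂ) : normC C (PowerSeries.C z) = ‖z‖₊ := by
  rw [normC_eq_tsum, tsum_eq_single 0 fun j hj => by simp [coeff_C, hj]]
  simp [borelWeight]

theorem normC_one (C : ℝ) : normC C 1 = 1 := by
  simpa using normC_C C 1

theorem normC_smul (C : ℝ) (c : ℂ) (f : ℂ⟦X⟧) : normC C (c • f) = ‖c‖₊ * normC C f := by
  simp_rw [normC_eq_tsum, ← ENNReal.tsum_mul_left, LinearMap.map_smul, smul_eq_mul, nnnorm_mul,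
    ENNReal.coe_mul, mul_assoc]

theorem normC_sub_le (C : ℝ) (f g : ℂ⟦X⟧) : normC C (f - g) ≤ normC C f + normC C g := by
  simp_rw [normC_eq_tsum, ← ENNReal.tsum_add, ← add_mul, map_sub]
  gcongr
  exact_mod_cast nnnorm_sub_le _ _

theorem normC_mul_le_of_X_pow_dvd {C : ℝ} (hC : 0 ≤ C) {n : ℕ} {f g : ℂ⟦X⟧}
    (hf : X ^ n ∣ f) (hg : X ∣ g) :
    (n + 1 : ℝ≥0∞) * normC C (f * g) ≤ normC C f * normC C g := by
  set a : ℕ → ℝ≥0∞ := fun j => ‖coeff j f‖₊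
  set b : ℕ → ℝ≥0∞ := fun k => ‖coeff k g‖₊
  have hterm : ∀ m : ℕ, ∀ p ∈ antidiagonal m,
      (n + 1 : ℝ≥0∞) * (a p.1 * b p.2 * borelWeight C m)
        ≤ a p.1 * borelWeight C p.1 * (b p.2 * borelWeight C p.2) := by
    rintro m ⟨j, k⟩ hjk
    obtain rfl : j + k = m := mem_antidiagonal.mp hjk
    by_cases hj : j < n
    · simp [a, X_pow_dvd_iff.mp hf j hj]
    by_cases hk : k = 0
    · simp [b, hk, X_dvd_iff.mp hg]
    calc (n + 1 : ℝ≥0∞) * (a j * b k * borelWeight C (j + k))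
        = a j * b k * ((n + 1 : ℕ) * borelWeight C (j + k)) := by push_cast; ring
      _ ≤ a j * b k * ((j + k).choose j * borelWeight C (j + k)) := by
        gcongr; exact Nat.succ_le_add_choose (not_lt.mp hj) (Nat.one_le_iff_ne_zero.mpr hk)
      _ = _ := by rw [← borelWeight_mul_borelWeight hC]; ring
  calc (n + 1 : ℝ≥0∞) * normC C (f * g)
      = ∑' m, (n + 1 : ℝ≥0∞) * (‖coeff m (f * g)‖₊ * borelWeight C m) := by
        rw [normC_eq_tsum, ENNReal.tsum_mul_left]
    _ ≤ ∑' m, ∑ p ∈ antidiagonal m, (n + 1 : ℝ≥0∞) * (a p.1 * b p.2 * borelWeight C m) := by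
        gcongr with m
        rw [← mul_sum, ← sum_mul]
        have hcoeff := ENNReal.coe_le_coe.mpr (nnnorm_coeff_mul_le_s7 m f g)
        push_cast at hcoeff
        gcongr
    _ ≤ ∑' m, ∑ p ∈ antidiagonal m, a p.1 * borelWeight C p.1 * (b p.2 * borelWeight C p.2) :=
        ENNReal.tsum_le_tsum fun m => sum_le_sum (hterm m)
    _ = normC C f * normC C g := by
        rw [normC_eq_tsum, normC_eq_tsum, ENNReal.tsum_mul_tsum_eq_tsum_sum_antidiagonal_s7]

theorem normC_pow_le {C : ℝ} (hC : 0 ≤ C) {g : ℂ⟦X⟧} (hg : X ∣ g) (n : ℕ) :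
    n ! * normC C (g ^ n) ≤ normC C g ^ n := by
  induction n with
  | zero => simp [normC_one]
  | succ n ih =>
    calc ((n + 1) ! : ℝ≥0∞) * normC C (g ^ (n + 1))
        = n ! * ((n + 1 : ℝ≥0∞) * normC C (g ^ n * g)) := by
          rw [Nat.factorial_succ, pow_succ]; push_cast; ring
      _ ≤ n ! * (normC C (g ^ n) * normC C g) :=
          mul_le_mul_right (normC_mul_le_of_X_pow_dvd hC (pow_dvd_pow_of_dvd hg n) hg) _
      _ ≤ normC C g ^ (n + 1) := by
          rw [← mul_assoc, pow_succ]; gcongr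

theorem normC_inv_one_sub_le {C : ℝ} (hC : 0 ≤ C) {h : ℂ⟦X⟧} (hh : X ∣ h)
    (hfin : normC C h ≠ ⊤) :
    normC C (1 - h)⁻¹ ≤ ENNReal.ofReal (Real.exp (normC C h).toReal) :=
  calc normC C (1 - h)⁻¹
      = ∑' m, ‖∑ n ∈ range (m + 1), coeff m (h ^ n)‖₊ * borelWeight C m := by
        simp_rw [normC_eq_tsum, coeff_inv_one_sub hh]
    _ ≤ ∑' m, ∑' n, ‖coeff m (h ^ n)‖₊ * borelWeight C m := by
        gcongr with m
        calc (‖∑ n ∈ range (m + 1), coeff m (h ^ n)‖₊ : ℝ≥0∞) * borelWeight C m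
            ≤ (∑ n ∈ range (m + 1), (‖coeff m (h ^ n)‖₊ : ℝ≥0∞)) * borelWeight C m := by
              gcongr; exact_mod_cast nnnorm_sum_le _ _
          _ ≤ _ := by rw [sum_mul]; exact ENNReal.sum_le_tsum _
    _ = ∑' n, normC C (h ^ n) := ENNReal.tsum_comm
    _ ≤ ∑' n, normC C h ^ n / n ! := by
        gcongr with n
        rw [ENNReal.le_div_iff_mul_le (by simp [n.factorial_ne_zero]) (by simp), mul_comm]
        exact normC_pow_le hC hh n
    _ = ENNReal.ofReal (Real.exp (normC C h).toReal) := ENNReal.tsum_pow_div_factorial hfin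

theorem normC_inv_lt_top {C : ℝ} (hC : 0 ≤ C) {f : ℂ⟦X⟧} (hf : normC C f < ⊤) :
    normC C f⁻¹ < ⊤ := by
  set c := constantCoeff f
  by_cases hc : c = 0
  · simp [PowerSeries.inv_eq_zero.mpr hc, normC_zero]
  set h := 1 - c⁻¹ • f
  have hh : X ∣ h := X_dvd_iff.mpr (by simp [h, c, inv_mul_cancel₀ hc])
  have hinv : f⁻¹ = c⁻¹ • (1 - h)⁻¹ := by
    rw [sub_sub_cancel, PowerSeries.smul_inv, inv_inv, smul_smul, inv_mul_cancel₀ hc, one_smul]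
  have hfin : normC C h < ⊤ :=
    (normC_sub_le C _ _).trans_lt (by
      rw [normC_one, normC_smul]
      exact ENNReal.add_lt_top.mpr ⟨ENNReal.one_lt_top, ENNReal.mul_lt_top ENNReal.coe_lt_top hf⟩)
  rw [hinv, normC_smul]
  exact ENNReal.mul_lt_top ENNReal.coe_lt_top
    ((normC_inv_one_sub_le hC hh hfin.ne).trans_lt ENNReal.ofReal_lt_top)

/-- An element `f ∈ A_C` is a unit of the ring `A_C` iff its constant
coefficient is nonzero; consequently (for any realization of `A_C` as a
subring `S` of `ℂ[[t]]`) `A_C` is a local ring whose maximal ideal is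
`{f ∈ A_C : f(0) = 0}`, and `f ↦ f(0)` induces a ring isomorphism of the
residue field of `A_C` with `ℂ`. -/
theorem statement_7 (C : ℝ) (hC : 0 < C)
    (S : Subring (PowerSeries ℂ)) (hS : (S : Set (PowerSeries ℂ)) = Asub C) :
    (∀ f ∈ Asub C, (∃ g ∈ Asub C, f * g = 1 ∧ g * f = 1) ↔
      PowerSeries.constantCoeff (R := ℂ) f ≠ 0) ∧
    IsLocalRing S ∧
    (∀ h : IsLocalRing S,
      ((IsLocalRing.maximalIdeal S : Set S) =
        {f : S | PowerSeries.constantCoeff (R := ℂ) (f : PowerSeries ℂ) = 0}) ∧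
      ∃ e : IsLocalRing.ResidueField S ≃+* ℂ,
        ∀ f : S, e (IsLocalRing.residue S f) =
          PowerSeries.constantCoeff (R := ℂ) (f : PowerSeries ℂ)) := by
  have hmem (f : ℂ⟦X⟧) : f ∈ S ↔ normC C f < ⊤ := by rw [← SetLike.mem_coe, hS]; rfl
  have hinv (f : ℂ⟦X⟧) (hf : f ∈ S) : f⁻¹ ∈ S :=
    (hmem _).mpr (normC_inv_lt_top hC.le ((hmem f).mp hf))
  have hconst (z : ℂ) : PowerSeries.C z ∈ S := (hmem _).mpr (by simp [normC_C])
  refine ⟨fun f hf => ⟨?_, fun h0 => ?_⟩, isLocalRing_of_inv_mem hinv, fun _ =>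
    ⟨?_, exists_residueField_equiv_of_inv_mem hinv hconst⟩⟩
  · rintro ⟨g, -, hfg, -⟩ h0
    simpa [h0] using congrArg constantCoeff hfg
  · exact ⟨f⁻¹, normC_inv_lt_top hC.le hf, PowerSeries.mul_inv_cancel f h0,
      PowerSeries.inv_mul_cancel f h0⟩
  · rw [maximalIdeal_eq_ker_of_inv_mem hinv]
    rfl
end
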